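/- arXiv:1709.06675 — 3 statements merged into one kernel-verified Lean document; each statement's English description precedes it below -/
import Mathlib

section
/- Let G be a finite simple bipartite graph with parts V₁ and V₂ in which every vertex has degree at least one, and let w : V → ℝ≥0 be a nonnegative vertex weight function. Then V₁ has minimum weight among all vertex covers of G (i.e., w(V₁) ≤ w(Π) for every vertex cover Π) if and only if the generalized Hall's condition holds: for every subset S ⊆ V₁, w(S) ≤ w(N(S)). -/
/-!
Every edge meets the independent cover `V₁` in exactly one endpoint. Trading `S ⊆ V₁` for `N(S)`
turns `V₁` into the cover `(V₁ \ S) ∪ N(S)`, so optimality of `V₁` forces Hall's condition.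
Conversely, for any cover `P` the set `S = V₁ \ P` has `N(S) ⊆ P \ V₁`, so Hall's condition gives
`w(V₁) = w(V₁ ∩ P) + w(S) ≤ w(V₁ ∩ P) + w(P \ V₁) = w(P)`.
-/

/-- `P` is a vertex cover of `G`: every edge has at least one endpoint in `P`. -/
def IsVertexCover {V : Type*} (G : SimpleGraph V) (P : Finset V) : Prop :=
  ∀ u v, G.Adj u v → u ∈ P ∨ v ∈ P

/-- The neighborhood `N(S)` of a set of vertices: all vertices adjacent to some vertex of `S`. -/
def nbhd {V : Type*} [Fintype V] [DecidableEq V] (G : SimpleGraph V) [DecidableRel G.Adj]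
    (S : Finset V) : Finset V :=
  S.biUnion (fun v => G.neighborFinset v)

section VertexCover

variable {V : Type*} [Fintype V] [DecidableEq V] {G : SimpleGraph V} [DecidableRel G.Adj]
  {A P S : Finset V}

@[simp]
theorem mem_nbhd {x : V} : x ∈ nbhd G S ↔ ∃ v ∈ S, G.Adj v x := by
  simp [nbhd]

theorem IsVertexCover.sdiff_union_nbhd (hA : IsVertexCover G A) (S : Finset V) :
    IsVertexCover G ((A \ S) ∪ nbhd G S) := by
  intro u v huv
  simp only [Finset.mem_union, Finset.mem_sdiff, mem_nbhd]
  by_cases hu : u ∈ S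
  · exact .inr (.inr ⟨u, hu, huv⟩)
  by_cases hv : v ∈ S
  · exact .inl (.inr ⟨v, hv, huv.symm⟩)
  rcases hA u v huv with h | h
  · exact .inl (.inl ⟨h, hu⟩)
  · exact .inr (.inl ⟨h, hv⟩)

theorem IsVertexCover.nbhd_subset (hP : IsVertexCover G P) (hS : Disjoint S P) :
    nbhd G S ⊆ P := by
  intro x hx
  obtain ⟨v, hvS, hvx⟩ := mem_nbhd.mp hx
  exact (hP v x hvx).resolve_left (Finset.disjoint_left.mp hS hvS)

theorem disjoint_nbhd_of_isIndepSet (hA : G.IsIndepSet (A : Set V)) (hS : S ⊆ A) :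
    Disjoint A (nbhd G S) := by
  refine Finset.disjoint_right.mpr fun x hx hxA => ?_
  obtain ⟨v, hvS, hvx⟩ := mem_nbhd.mp hx
  exact hA (hS hvS) hxA hvx.ne hvx

variable {w : V → ℝ}

theorem hall_of_forall_isVertexCover_sum_le (hind : G.IsIndepSet (A : Set V))
    (hA : IsVertexCover G A) (hmin : ∀ P, IsVertexCover G P → A.sum w ≤ P.sum w)
    (hS : S ⊆ A) : S.sum w ≤ (nbhd G S).sum w := by
  have hdisj : Disjoint (A \ S) (nbhd G S) :=
    (disjoint_nbhd_of_isIndepSet hind hS).mono_left Finset.sdiff_subset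
  have hcover := hmin _ (hA.sdiff_union_nbhd S)
  rw [Finset.sum_union hdisj, ← Finset.sum_sdiff hS] at hcover
  linarith

theorem sum_le_of_hall (hind : G.IsIndepSet (A : Set V)) (hw : ∀ v, 0 ≤ w v)
    (hall : ∀ S ⊆ A, S.sum w ≤ (nbhd G S).sum w) (hP : IsVertexCover G P) :
    A.sum w ≤ P.sum w := by
  have hN : nbhd G (A \ P) ⊆ P \ A := Finset.subset_sdiff.mpr
    ⟨hP.nbhd_subset Finset.sdiff_disjoint,
      (disjoint_nbhd_of_isIndepSet hind Finset.sdiff_subset).symm⟩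
  calc A.sum w = (A ∩ P).sum w + (A \ P).sum w := (Finset.sum_inter_add_sum_sdiff A P w).symm
    _ ≤ (A ∩ P).sum w + (P \ A).sum w :=
      add_le_add le_rfl <| (hall _ Finset.sdiff_subset).trans
        (Finset.sum_le_sum_of_subset_of_nonneg hN fun v _ _ => hw v)
    _ = P.sum w := by rw [Finset.inter_comm, Finset.sum_inter_add_sum_sdiff]

end VertexCover

theorem monolog_optimal_iff_GHC_general {V : Type*} [Fintype V] [DecidableEq V]
    (G : SimpleGraph V) [DecidableRel G.Adj]
    (V₁ V₂ : Finset V)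
    (hdisj : Disjoint V₁ V₂)
    (hbip : ∀ u v, G.Adj u v → (u ∈ V₁ ∧ v ∈ V₂) ∨ (u ∈ V₂ ∧ v ∈ V₁))
    (w : V → ℝ) (hw : ∀ v, 0 ≤ w v) :
    (∀ P : Finset V, IsVertexCover G P → V₁.sum w ≤ P.sum w) ↔
      (∀ S ⊆ V₁, S.sum w ≤ (nbhd G S).sum w) := by
  have hcover : IsVertexCover G V₁ := fun u v huv => by
    rcases hbip u v huv with h | h
    exacts [.inl h.1, .inr h.2]
  have hind : G.IsIndepSet (V₁ : Set V) := fun u hu v hv _ huv => by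
    rcases hbip u v huv with h | h
    exacts [Finset.disjoint_left.mp hdisj hv h.2, Finset.disjoint_left.mp hdisj hu h.1]
  exact ⟨fun hmin _ hS => hall_of_forall_isVertexCover_sum_le hind hcover hmin hS,
    fun hall _ hP => sum_le_of_hall hind hw hall hP⟩

/-- In a finite bipartite graph with parts `V₁`, `V₂`, minimum degree ≥ 1,
and nonnegative vertex weights `w`, the part `V₁` has minimum weight among all vertex
covers iff the generalized Hall's condition holds: `w(S) ≤ w(N(S))` for every `S ⊆ V₁`. -/
theorem monolog_optimal_iff_GHC {V : Type*} [Fintype V] [DecidableEq V]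
    (G : SimpleGraph V) [DecidableRel G.Adj]
    (V₁ V₂ : Finset V)
    (hdisj : Disjoint V₁ V₂) (hunion : V₁ ∪ V₂ = Finset.univ)
    (hbip : ∀ u v, G.Adj u v → (u ∈ V₁ ∧ v ∈ V₂) ∨ (u ∈ V₂ ∧ v ∈ V₁))
    (hdeg : ∀ v, 1 ≤ G.degree v)
    (w : V → ℝ) (hw : ∀ v, 0 ≤ w v) :
    (∀ P : Finset V, IsVertexCover G P → V₁.sum w ≤ P.sum w) ↔
      (∀ S ⊆ V₁, S.sum w ≤ (nbhd G S).sum w) :=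
  monolog_optimal_iff_GHC_general G V₁ V₂ hdisj hbip w hw
end

section
/- Let G be a finite simple bipartite graph with parts V₁ and V₂ in which every vertex has degree at least one, let c assign a nonnegative cost c(u,v) ≥ 0 to every edge, and let α₁, α₂ ≥ 0 with α₁ ≥ α₂. Define the vertex weight w_ℓ(v) = α₂ · Σ_{u∼v} c(u,v) for v ∈ V₁ and w_ℓ(v) = α₁ · Σ_{u∼v} c(u,v) for v ∈ V₂. Then V₁ (the part corresponding to the larger coefficient α₁) has minimum weight among all vertex covers of G: w_ℓ(V₁) ≤ w_ℓ(Π) for every vertex cover Π. -/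
/-!
Write `d v = ∑_{u ∼ v} c u v` for the cost-weighted degree. Then `w_ℓ(V₁) = α₂ · ∑_{v ∈ V₁} d v`,
while `w_ℓ(v) ≥ α₂ · d v` for every vertex since `α₁ ≥ α₂` and `d ≥ 0`. So it suffices that the
independent set `V₁` has weighted degree sum at most that of any vertex cover `Π`: an edge leaving
`V₁ \ Π` must enter `Π \ V₁`, so it is counted on the side of `Π` as well.
-/

open Finset

namespace SimpleGraph

theorem IsBipartiteWith.isIndepSet_left {V : Type*} {G : SimpleGraph V} {s t : Set V}
    (h : G.IsBipartiteWith s t) : G.IsIndepSet s :=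
  fun _ hv _ hw _ hadj => Set.disjoint_left.mp h.disjoint hw (h.mem_of_mem_adj hv hadj)

variable {V : Type*} [Fintype V] (G : SimpleGraph V) [DecidableRel G.Adj]

def weightedDegree (c : V → V → ℝ) (v : V) : ℝ :=
  ∑ u ∈ G.neighborFinset v, c u v

variable {G} {c : V → V → ℝ}

theorem weightedDegree_nonneg (hc : ∀ u v, G.Adj u v → 0 ≤ c u v) (v : V) :
    0 ≤ G.weightedDegree c v :=
  sum_nonneg fun u hu => hc u v ((mem_neighborFinset G v u).mp hu).symm

variable [DecidableEq V]

theorem sum_weightedDegree_sdiff_le {S P : Finset V} (hS : G.IsIndepSet S)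
    (hP : G.IsVertexCover P) (hc : ∀ u v, G.Adj u v → 0 ≤ c u v)
    (hsym : ∀ u v, G.Adj u v → c u v = c v u) :
    ∑ v ∈ S \ P, G.weightedDegree c v ≤ ∑ u ∈ P \ S, G.weightedDegree c u := by
  have hswap : ∑ v ∈ S \ P, G.weightedDegree c v
      = ∑ u ∈ P \ S, ∑ v ∈ (S \ P).filter (G.Adj u), c v u := by
    refine sum_comm' (fun v u => ?_) |>.trans (sum_congr rfl fun u _ => sum_congr rfl fun v hv =>
      hsym u v (mem_filter.mp hv).2)
    simp only [mem_neighborFinset, mem_filter, mem_sdiff]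
    constructor
    · rintro ⟨⟨hvS, hvP⟩, hadj⟩
      have huP : u ∈ P := (hP hadj).resolve_left hvP
      exact ⟨⟨⟨hvS, hvP⟩, hadj.symm⟩, huP, fun huS => hS hvS huS hadj.ne hadj⟩
    · rintro ⟨⟨hvSP, hadj⟩, -⟩
      exact ⟨hvSP, hadj.symm⟩
  rw [hswap]
  refine sum_le_sum fun u _ => sum_le_sum_of_subset_of_nonneg (fun v hv => ?_) fun v hv _ => ?_
  · exact (mem_neighborFinset G u v).mpr (mem_filter.mp hv).2
  · exact hc v u ((mem_neighborFinset G u v).mp hv).symm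

theorem sum_weightedDegree_le_of_isIndepSet {S P : Finset V} (hS : G.IsIndepSet S)
    (hP : G.IsVertexCover P) (hc : ∀ u v, G.Adj u v → 0 ≤ c u v)
    (hsym : ∀ u v, G.Adj u v → c u v = c v u) :
    ∑ v ∈ S, G.weightedDegree c v ≤ ∑ v ∈ P, G.weightedDegree c v := by
  rw [← sum_inter_add_sum_sdiff S P, ← sum_inter_add_sum_sdiff P S, inter_comm]
  exact add_le_add_right (sum_weightedDegree_sdiff_le hS hP hc hsym) _

end SimpleGraph

open Finset in
theorem monolog_optimal_for_workload_general {V : Type*} [Fintype V] [DecidableEq V]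
    (G : SimpleGraph V) [DecidableRel G.Adj]
    (V₁ V₂ : Finset V)
    (hdisj : Disjoint V₁ V₂)
    (hbip : ∀ u v, G.Adj u v → (u ∈ V₁ ∧ v ∈ V₂) ∨ (u ∈ V₂ ∧ v ∈ V₁))
    (c : V → V → ℝ)
    (hc : ∀ u v, G.Adj u v → 0 ≤ c u v)
    (hsym : ∀ u v, c u v = c v u)
    (α₁ α₂ : ℝ) (hα₂ : 0 ≤ α₂) (hα : α₂ ≤ α₁)
    (wl : V → ℝ)
    (hwl : ∀ v, wl v =
      if v ∈ V₁ then α₂ * ∑ u ∈ G.neighborFinset v, c u v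
      else α₁ * ∑ u ∈ G.neighborFinset v, c u v) :
    ∀ P : Finset V, IsVertexCover G P → V₁.sum wl ≤ P.sum wl := by
  intro P hP
  have hG : G.IsBipartiteWith V₁ V₂ :=
    ⟨disjoint_coe.mpr hdisj, fun u v h => by simpa using hbip u v h⟩
  have hwl_ge (v : V) : α₂ * G.weightedDegree c v ≤ wl v := by
    rw [hwl v]
    split_ifs
    · rfl
    · exact mul_le_mul_of_nonneg_right hα (SimpleGraph.weightedDegree_nonneg hc v)
  calc V₁.sum wl = α₂ * ∑ v ∈ V₁, G.weightedDegree c v := by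
        rw [mul_sum]
        exact sum_congr rfl fun v hv => by rw [hwl v, if_pos hv, SimpleGraph.weightedDegree]
    _ ≤ α₂ * ∑ v ∈ P, G.weightedDegree c v :=
        mul_le_mul_of_nonneg_left (SimpleGraph.sum_weightedDegree_le_of_isIndepSet
          hG.isIndepSet_left (fun u v h => hP u v h) hc fun u v _ => hsym u v) hα₂
    _ = ∑ v ∈ P, α₂ * G.weightedDegree c v := mul_sum _ _ _
    _ ≤ P.sum wl := sum_le_sum fun v _ => hwl_ge v

open Finset in
/-- With workload weights `w_ℓ(v) = α₂ ∑_{u∼v} c u v` for `v ∈ V₁` and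
`w_ℓ(v) = α₁ ∑_{u∼v} c u v` for `v ∈ V₂`, where `α₁ ≥ α₂ ≥ 0`, the part `V₁`
(corresponding to the larger coefficient) has minimum weight among all vertex covers. -/
theorem monolog_optimal_for_workload {V : Type*} [Fintype V] [DecidableEq V]
    (G : SimpleGraph V) [DecidableRel G.Adj]
    (V₁ V₂ : Finset V)
    (hdisj : Disjoint V₁ V₂) (hunion : V₁ ∪ V₂ = Finset.univ)
    (hbip : ∀ u v, G.Adj u v → (u ∈ V₁ ∧ v ∈ V₂) ∨ (u ∈ V₂ ∧ v ∈ V₁))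
    (hdeg : ∀ v, 1 ≤ G.degree v)
    (c : V → V → ℝ)
    (hc : ∀ u v, G.Adj u v → 0 ≤ c u v)
    (hsym : ∀ u v, c u v = c v u)
    (α₁ α₂ : ℝ) (hα₂ : 0 ≤ α₂) (hα : α₂ ≤ α₁)
    (wl : V → ℝ)
    (hwl : ∀ v, wl v =
      if v ∈ V₁ then α₂ * ∑ u ∈ G.neighborFinset v, c u v
      else α₁ * ∑ u ∈ G.neighborFinset v, c u v) :
    ∀ P : Finset V, IsVertexCover G P → V₁.sum wl ≤ P.sum wl :=
  monolog_optimal_for_workload_general G V₁ V₂ hdisj hbip c hc hsym α₁ α₂ hα₂ hα wl hwl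
end

section
/- Let G be a finite simple bipartite graph with parts V₁ and V₂, and let w : V → ℝ≥0 be a nonnegative vertex weight function. Then the linear-programming relaxation of the minimum-weight vertex cover problem is tight: the minimum of Σ_{v∈V} w(v)·x(v) over all fractional covers x : V → ℝ (i.e., x(v) ≥ 0 for all v and x(u) + x(v) ≥ 1 for every edge {u,v}) is attained by some x taking values only in {0,1}; equivalently, this minimum equals the minimum weight w(Π) over all (integral) vertex covers Π of G. -/
/-- `x : V → ℝ` is a fractional cover of `G`: `x ≥ 0` and `x u + x v ≥ 1` on edges. -/
def IsFracCover {V : Type*} (G : SimpleGraph V) (x : V → ℝ) : Prop :=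
  (∀ v, 0 ≤ x v) ∧ ∀ u v, G.Adj u v → 1 ≤ x u + x v

/-! Threshold rounding: for a fractional cover `y` and `t ∈ (0, 1]`, the vertices `v ∈ V₁` with
`t < y v` together with the `v ∈ V₂` with `1 - t ≤ y v` form a vertex cover, because an edge `uv`
with `u ∈ V₁` uncovered has `y v ≥ 1 - y u ≥ 1 - t`. For `t` uniform on `(0, 1]` a vertex `v` lies
in this cover with probability at most `y v`, so some `t` gives a cover of weight at most
`∑ v, w v * y v`. Hence a minimum-weight vertex cover is an optimal fractional cover. -/

open Finset MeasureTheory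

instance : IsProbabilityMeasure (volume.restrict (Set.Ioc (0 : ℝ) 1)) := ⟨by simp⟩

theorem measureReal_restrict_Ioc_Iio_le {a : ℝ} (ha : 0 ≤ a) :
    (volume.restrict (Set.Ioc (0 : ℝ) 1)).real (Set.Iio a) ≤ a := by
  rw [measureReal_restrict_apply measurableSet_Iio]
  calc volume.real (Set.Iio a ∩ Set.Ioc 0 1) ≤ volume.real (Set.Ioo 0 a) :=
        measureReal_mono (fun t ht => ⟨ht.2.1, ht.1⟩) measure_Ioo_lt_top.ne
    _ = a := by simp [Real.volume_real_Ioo_of_le ha]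

theorem measureReal_restrict_Ioc_Ici_one_sub_le {a : ℝ} (ha : 0 ≤ a) :
    (volume.restrict (Set.Ioc (0 : ℝ) 1)).real (Set.Ici (1 - a)) ≤ a := by
  rw [measureReal_restrict_apply measurableSet_Ici]
  calc volume.real (Set.Ici (1 - a) ∩ Set.Ioc 0 1) ≤ volume.real (Set.Icc (1 - a) 1) :=
        measureReal_mono (fun t ht => ⟨ht.1, ht.2.2⟩) measure_Icc_lt_top.ne
    _ = a := by rw [Real.volume_real_Icc_of_le (by linarith)]; ring

noncomputable def thresholdCover {V : Type*} [DecidableEq V] (V₁ V₂ : Finset V) (y : V → ℝ)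
    (t : ℝ) : Finset V :=
  {v ∈ V₁ | t < y v} ∪ {v ∈ V₂ | 1 - t ≤ y v}

section ThresholdCover

variable {V : Type*} [DecidableEq V] {V₁ V₂ : Finset V} {y : V → ℝ}

theorem isVertexCover_thresholdCover {G : SimpleGraph V}
    (hbip : ∀ u v, G.Adj u v → (u ∈ V₁ ∧ v ∈ V₂) ∨ (u ∈ V₂ ∧ v ∈ V₁))
    (hy : ∀ u v, G.Adj u v → 1 ≤ y u + y v) (t : ℝ) :
    IsVertexCover G (thresholdCover V₁ V₂ y t) := by
  have key : ∀ a ∈ V₁, ∀ b ∈ V₂, 1 ≤ y a + y b →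
      a ∈ thresholdCover V₁ V₂ y t ∨ b ∈ thresholdCover V₁ V₂ y t := by
    intro a ha b hb hab
    by_cases hta : t < y a
    · exact .inl (mem_union_left _ (mem_filter.2 ⟨ha, hta⟩))
    · exact .inr (mem_union_right _ (mem_filter.2 ⟨hb, by linarith⟩))
  intro u v huv
  rcases hbip u v huv with ⟨hu, hv⟩ | ⟨hu, hv⟩
  · exact key u hu v hv (hy u v huv)
  · exact (key v hv u hu (by linarith [hy u v huv])).symm

theorem sum_thresholdCover (hdisj : Disjoint V₁ V₂) (w : V → ℝ) (t : ℝ) :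
    (thresholdCover V₁ V₂ y t).sum w =
      ∑ v ∈ V₁, (Set.Iio (y v)).indicator (fun _ => w v) t +
        ∑ v ∈ V₂, (Set.Ici (1 - y v)).indicator (fun _ => w v) t := by
  rw [thresholdCover, sum_union (disjoint_filter_filter hdisj), sum_filter, sum_filter]
  simp [Set.indicator, add_comm]

theorem integrable_sum_thresholdCover (hdisj : Disjoint V₁ V₂) (w : V → ℝ) :
    Integrable (fun t => (thresholdCover V₁ V₂ y t).sum w) (volume.restrict (Set.Ioc 0 1)) := by
  simp only [sum_thresholdCover hdisj]
  exact (integrable_finsetSum _ fun v _ => (integrable_const _).indicator measurableSet_Iio).add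
    (integrable_finsetSum _ fun v _ => (integrable_const _).indicator measurableSet_Ici)

theorem integral_sum_thresholdCover_le (hdisj : Disjoint V₁ V₂) {w : V → ℝ} (hw : ∀ v, 0 ≤ w v)
    (hy : ∀ v, 0 ≤ y v) :
    ∫ t in Set.Ioc 0 1, (thresholdCover V₁ V₂ y t).sum w ≤
      ∑ v ∈ V₁, w v * y v + ∑ v ∈ V₂, w v * y v := by
  have h₁ : ∀ v ∈ V₁, Integrable ((Set.Iio (y v)).indicator fun _ => w v)
      (volume.restrict (Set.Ioc 0 1)) := fun v _ =>
    (integrable_const _).indicator measurableSet_Iio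
  have h₂ : ∀ v ∈ V₂, Integrable ((Set.Ici (1 - y v)).indicator fun _ => w v)
      (volume.restrict (Set.Ioc 0 1)) := fun v _ =>
    (integrable_const _).indicator measurableSet_Ici
  simp only [sum_thresholdCover hdisj]
  rw [integral_add (integrable_finsetSum _ h₁) (integrable_finsetSum _ h₂),
    integral_finsetSum _ h₁, integral_finsetSum _ h₂]
  simp only [integral_indicator_const _ measurableSet_Iio,
    integral_indicator_const _ measurableSet_Ici, smul_eq_mul]
  refine add_le_add (sum_le_sum fun v _ => ?_) (sum_le_sum fun v _ => ?_)
  · rw [mul_comm]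
    exact mul_le_mul_of_nonneg_left (measureReal_restrict_Ioc_Iio_le (hy v)) (hw v)
  · rw [mul_comm]
    exact mul_le_mul_of_nonneg_left (measureReal_restrict_Ioc_Ici_one_sub_le (hy v)) (hw v)

end ThresholdCover

theorem exists_isVertexCover_sum_le_of_isFracCover {V : Type*} [Fintype V] [DecidableEq V]
    {G : SimpleGraph V} {V₁ V₂ : Finset V} (hdisj : Disjoint V₁ V₂)
    (hbip : ∀ u v, G.Adj u v → (u ∈ V₁ ∧ v ∈ V₂) ∨ (u ∈ V₂ ∧ v ∈ V₁))
    {w : V → ℝ} (hw : ∀ v, 0 ≤ w v) {y : V → ℝ} (hy : IsFracCover G y) :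
    ∃ P : Finset V, IsVertexCover G P ∧ P.sum w ≤ ∑ v, w v * y v := by
  obtain ⟨t, ht⟩ := exists_le_integral (integrable_sum_thresholdCover (y := y) hdisj w)
  refine ⟨_, isVertexCover_thresholdCover hbip hy.2 t, ?_⟩
  calc (thresholdCover V₁ V₂ y t).sum w
      ≤ ∑ v ∈ V₁, w v * y v + ∑ v ∈ V₂, w v * y v :=
        ht.trans (integral_sum_thresholdCover_le hdisj hw hy.1)
    _ = ∑ v ∈ V₁ ∪ V₂, w v * y v := (sum_union hdisj).symm
    _ ≤ ∑ v, w v * y v := sum_le_univ_sum_of_nonneg fun v => mul_nonneg (hw v) (hy.1 v)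

theorem exists_isVertexCover_forall_sum_le {V : Type*} [Fintype V] (G : SimpleGraph V)
    (w : V → ℝ) :
    ∃ P : Finset V, IsVertexCover G P ∧ ∀ Q : Finset V, IsVertexCover G Q → P.sum w ≤ Q.sum w := by
  classical
  obtain ⟨P, hP, hmin⟩ := exists_min_image {P : Finset V | IsVertexCover G P} (·.sum w)
    ⟨univ, mem_filter.2 ⟨mem_univ _, fun u _ _ => .inl (mem_univ u)⟩⟩
  exact ⟨P, (mem_filter.1 hP).2, fun Q hQ => hmin Q (mem_filter.2 ⟨mem_univ Q, hQ⟩)⟩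

theorem isFracCover_ite_mem {V : Type*} [DecidableEq V] {G : SimpleGraph V} {P : Finset V}
    (hP : IsVertexCover G P) : IsFracCover G fun v => if v ∈ P then 1 else 0 := by
  refine ⟨fun v => by beta_reduce; split_ifs <;> norm_num, fun u v huv => ?_⟩
  beta_reduce
  rcases hP u v huv with h | h <;> split_ifs <;> norm_num

theorem sum_mul_ite_mem {V : Type*} [Fintype V] [DecidableEq V] (w : V → ℝ) (P : Finset V) :
    ∑ v, w v * (if v ∈ P then 1 else 0) = P.sum w := by
  simp [mul_ite, sum_ite_mem]

open Finset in
theorem bipartite_vc_LP_tight_general {V : Type*} [Fintype V]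
    (G : SimpleGraph V)
    (V₁ V₂ : Finset V)
    (hdisj : Disjoint V₁ V₂)
    (hbip : ∀ u v, G.Adj u v → (u ∈ V₁ ∧ v ∈ V₂) ∨ (u ∈ V₂ ∧ v ∈ V₁))
    (w : V → ℝ) (hw : ∀ v, 0 ≤ w v) :
    ∃ x : V → ℝ, IsFracCover G x ∧ (∀ v, x v = 0 ∨ x v = 1) ∧
      (∀ y : V → ℝ, IsFracCover G y → ∑ v, w v * x v ≤ ∑ v, w v * y v) ∧
      ∃ P : Finset V, IsVertexCover G P ∧ (∑ v, w v * x v) = P.sum w ∧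
        ∀ Q : Finset V, IsVertexCover G Q → P.sum w ≤ Q.sum w := by
  classical
  obtain ⟨P, hP, hPmin⟩ := exists_isVertexCover_forall_sum_le G w
  refine ⟨fun v => if v ∈ P then 1 else 0, isFracCover_ite_mem hP,
    fun v => by beta_reduce; split_ifs <;> simp, fun y hy => ?_, P, hP, sum_mul_ite_mem w P, hPmin⟩
  obtain ⟨Q, hQ, hQy⟩ := exists_isVertexCover_sum_le_of_isFracCover hdisj hbip hw hy
  rw [sum_mul_ite_mem]
  exact (hPmin Q hQ).trans hQy

open Finset in
/-- For a finite bipartite graph with nonnegative vertex weights, the LP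
relaxation of minimum-weight vertex cover is tight: the minimum of `∑ v, w v * x v`
over fractional covers `x` is attained by some `x` taking values in `{0,1}`;
equivalently, this minimum equals the minimum weight of an integral vertex cover. -/
theorem bipartite_vc_LP_tight {V : Type*} [Fintype V] [DecidableEq V]
    (G : SimpleGraph V) [DecidableRel G.Adj]
    (V₁ V₂ : Finset V)
    (hdisj : Disjoint V₁ V₂) (hunion : V₁ ∪ V₂ = Finset.univ)
    (hbip : ∀ u v, G.Adj u v → (u ∈ V₁ ∧ v ∈ V₂) ∨ (u ∈ V₂ ∧ v ∈ V₁))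
    (w : V → ℝ) (hw : ∀ v, 0 ≤ w v) :
    ∃ x : V → ℝ, IsFracCover G x ∧ (∀ v, x v = 0 ∨ x v = 1) ∧
      (∀ y : V → ℝ, IsFracCover G y → ∑ v, w v * x v ≤ ∑ v, w v * y v) ∧
      ∃ P : Finset V, IsVertexCover G P ∧ (∑ v, w v * x v) = P.sum w ∧
        ∀ Q : Finset V, IsVertexCover G Q → P.sum w ≤ Q.sum w :=
  bipartite_vc_LP_tight_general G V₁ V₂ hdisj hbip w hw
end
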